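/- arXiv:1709.00142 — 2 statements merged into one kernel-verified Lean document; each statement's English description precedes it below -/
import Mathlib

section
/- In the partition monoid P_n, the map sending each partition α of rank at most 1 to the unique partition α̂ of rank 0 with the same kernel and cokernel as α is a retraction from the ideal I₁ = {α ∈ P_n : rank(α) ≤ 1} onto the minimal ideal I₀ = {α ∈ P_n : rank(α) = 0}; that is, it is a homomorphism fixing I₀ pointwise. -/
namespace PM

/-- The points `{1,…,n} ∪ {1',…,n'}`: `Sum.inl` is the top row, `Sum.inr` the bottom row. -/
abbrev Pt (n : ℕ) := Fin n ⊕ Fin n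

/-- An element of the partition monoid `P_n`: a set partition of `Pt n`,
encoded as an equivalence relation (setoid). -/
abbrev Ptn (n : ℕ) := Setoid (Pt n)

/-- Embedding of the first factor (as top and middle layer) into the three-layer set. -/
def iota1 {n : ℕ} : Pt n → (Fin n ⊕ Pt n)
  | Sum.inl i => Sum.inl i
  | Sum.inr i => Sum.inr (Sum.inl i)

/-- Embedding of the second factor (as middle and bottom layer). -/
def iota2 {n : ℕ} : Pt n → (Fin n ⊕ Pt n)
  | Sum.inl i => Sum.inr (Sum.inl i)
  | Sum.inr i => Sum.inr (Sum.inr i)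

/-- Embedding of the product (top and bottom layer). -/
def iota3 {n : ℕ} : Pt n → (Fin n ⊕ Pt n)
  | Sum.inl i => Sum.inl i
  | Sum.inr i => Sum.inr (Sum.inr i)

/-- The edges of the product graph Π(α,β) on the three-layer vertex set. -/
def mulBase {n : ℕ} (α β : Ptn n) (a b : Fin n ⊕ Pt n) : Prop :=
  (∃ x y : Pt n, α.r x y ∧ iota1 x = a ∧ iota1 y = b) ∨
    (∃ x y : Pt n, β.r x y ∧ iota2 x = a ∧ iota2 y = b)

/-- The product in the partition monoid: `x, y` lie in the same block of `α * β`
iff they are connected by a path in the product graph. -/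
def pmul {n : ℕ} (α β : Ptn n) : Ptn n :=
  Setoid.comap iota3 (Relation.EqvGen.setoid (mulBase α β))

/-- The identity partition, with blocks `{i, i'}`. -/
def pone (n : ℕ) : Ptn n := Setoid.ker (Sum.elim id id)

/-- The domain: top points lying in a transversal block. -/
def dom {n : ℕ} (α : Ptn n) : Set (Fin n) := {i | ∃ j, α.r (Sum.inl i) (Sum.inr j)}

/-- The codomain: bottom points lying in a transversal block. -/
def codom {n : ℕ} (α : Ptn n) : Set (Fin n) := {j | ∃ i, α.r (Sum.inl i) (Sum.inr j)}

/-- The kernel: the induced equivalence on the top row. -/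
def kerr {n : ℕ} (α : Ptn n) (i j : Fin n) : Prop := α.r (Sum.inl i) (Sum.inl j)

/-- The cokernel: the induced equivalence on the bottom row. -/
def cokerr {n : ℕ} (α : Ptn n) (i j : Fin n) : Prop := α.r (Sum.inr i) (Sum.inr j)

/-- The rank: the number of transversal blocks, counted via the minimal
top point of each transversal block. -/
noncomputable def rank {n : ℕ} (α : Ptn n) : ℕ :=
  Set.ncard {i : Fin n | i ∈ dom α ∧ ∀ j ∈ dom α, kerr α i j → i ≤ j}

/-- Green's R relation on `P_n` (a monoid, so no extra identity is needed). -/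
def PGreenR {n : ℕ} (α β : Ptn n) : Prop :=
  (∃ γ, pmul α γ = β) ∧ ∃ γ, pmul β γ = α

/-- Green's L relation on `P_n`. -/
def PGreenL {n : ℕ} (α β : Ptn n) : Prop :=
  (∃ γ, pmul γ α = β) ∧ ∃ γ, pmul γ β = α

/-- Green's J relation on `P_n`. -/
def PGreenJ {n : ℕ} (α β : Ptn n) : Prop :=
  (∃ γ δ, pmul (pmul γ α) δ = β) ∧ ∃ γ δ, pmul (pmul γ β) δ = α

/-- The involution `α ↦ α*`, reflecting in the horizontal axis. -/
def star {n : ℕ} (α : Ptn n) : Ptn n := Setoid.comap Sum.swap α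

/-- `α̂` : the unique partition of rank 0 with the same kernel and cokernel as `α`:
it relates two points iff they lie on the same row and are `α`-related. -/
def hat {n : ℕ} (α : Ptn n) : Ptn n where
  r x y := α.r x y ∧ x.isLeft = y.isLeft
  iseqv :=
    ⟨fun x => ⟨α.iseqv.refl x, rfl⟩,
     fun h => ⟨α.iseqv.symm h.1, h.2.symm⟩,
     fun h h' => ⟨α.iseqv.trans h.1 h'.1, h.2.trans h'.2⟩⟩

/-- `α` is a Brauer element: every block has size exactly 2. -/
def IsBrauer {n : ℕ} (α : Ptn n) : Prop :=
  ∀ x : Pt n, ∃ y, y ≠ x ∧ α.r x y ∧ ∀ z, α.r x z → z = x ∨ z = y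

/-- Position of a point in the boundary order `1, …, n, n', …, 1'`. -/
def ordPos {n : ℕ} : Pt n → ℕ
  | Sum.inl i => i.val
  | Sum.inr j => 2 * n - 1 - j.val

/-- `α` is planar: no two of its blocks cross with respect to the boundary order. -/
def IsPlanar {n : ℕ} (α : Ptn n) : Prop :=
  ∀ w x y z : Pt n, ordPos w < ordPos x → ordPos x < ordPos y → ordPos y < ordPos z →
    α.r w y → α.r x z → α.r w x

end PM

/-!
A rank-0 partition has no transversal pairs, so it is determined by its kernel and cokernel;
every claim therefore reduces to comparing kernels and cokernels. For the product, label each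
vertex of the product graph of `α` and `β` by its `α`-block (top row) or `β`-block (bottom row),
giving one common label to the middle row and to every block that meets it. Edges preserve
labels, so `ker (α * β) ⊆ ker α ∪ dom α × dom α`; when `rank α ≤ 1`, `dom α` lies in a single
kernel class and `ker (α * β) = ker α`. Dually `coker (α * β) = coker β` when `rank β ≤ 1`, and
both `hat (α * β)` and `hat α * hat β` have rank 0.
-/

namespace PM

variable {n : ℕ}

section Rank

variable {α : Ptn n} {i j : Fin n}

def transversalReps (α : Ptn n) : Set (Fin n) :=
  {i | i ∈ dom α ∧ ∀ j ∈ dom α, kerr α i j → i ≤ j}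

lemma rank_eq_ncard_transversalReps (α : Ptn n) : rank α = (transversalReps α).ncard := rfl

lemma mem_dom_of_kerr (h : kerr α i j) (hj : j ∈ dom α) : i ∈ dom α :=
  let ⟨k, hk⟩ := hj
  ⟨k, α.trans h hk⟩

lemma mem_codom_of_cokerr (h : cokerr α i j) (hj : j ∈ codom α) : i ∈ codom α :=
  let ⟨k, hk⟩ := hj
  ⟨k, α.trans hk (α.symm h)⟩

lemma exists_mem_transversalReps_kerr (hi : i ∈ dom α) :
    ∃ m ∈ transversalReps α, kerr α i m := by
  obtain ⟨m, ⟨hm, him⟩, hmin⟩ :=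
    Set.exists_min_image {k | k ∈ dom α ∧ kerr α i k} id (Set.toFinite _) ⟨i, hi, α.refl _⟩
  exact ⟨m, ⟨hm, fun j hj hmj => hmin j ⟨hj, α.trans him hmj⟩⟩, him⟩

lemma rank_eq_zero_iff : rank α = 0 ↔ ∀ i, i ∉ dom α := by
  rw [rank_eq_ncard_transversalReps, Set.ncard_eq_zero, Set.eq_empty_iff_forall_notMem]
  refine ⟨fun h i hi => ?_, fun h i hi => h i hi.1⟩
  obtain ⟨m, hm, -⟩ := exists_mem_transversalReps_kerr hi
  exact h m hm

lemma not_rel_inl_inr_of_rank_eq_zero (h : rank α = 0) : ¬ α.r (Sum.inl i) (Sum.inr j) :=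
  fun hij => rank_eq_zero_iff.1 h i ⟨j, hij⟩

lemma kerr_of_rank_le_one (h : rank α ≤ 1) (hi : i ∈ dom α) (hj : j ∈ dom α) :
    kerr α i j := by
  by_contra hij
  obtain ⟨mi, hmi, hi⟩ := exists_mem_transversalReps_kerr hi
  obtain ⟨mj, hmj, hj⟩ := exists_mem_transversalReps_kerr hj
  have hne : mi ≠ mj := by
    rintro rfl
    exact hij (α.trans hi (α.symm hj))
  have := (Set.one_lt_ncard (Set.toFinite _)).2 ⟨mi, hmi, mj, hmj, hne⟩
  rw [rank_eq_ncard_transversalReps] at h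
  omega

lemma cokerr_of_rank_le_one (h : rank α ≤ 1) (hi : i ∈ codom α) (hj : j ∈ codom α) :
    cokerr α i j := by
  obtain ⟨i', hi⟩ := hi
  obtain ⟨j', hj⟩ := hj
  exact α.trans (α.symm hi) (α.trans (kerr_of_rank_le_one h ⟨i, hi⟩ ⟨j, hj⟩) hj)

lemma eq_of_rank_eq_zero {α β : Ptn n} (hα : rank α = 0) (hβ : rank β = 0)
    (hker : ∀ i j, kerr α i j ↔ kerr β i j) (hcoker : ∀ i j, cokerr α i j ↔ cokerr β i j) :
    α = β := by
  ext x y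
  rcases x with i | i <;> rcases y with j | j
  · exact hker i j
  · exact iff_of_false (not_rel_inl_inr_of_rank_eq_zero hα) (not_rel_inl_inr_of_rank_eq_zero hβ)
  · exact iff_of_false (fun h => not_rel_inl_inr_of_rank_eq_zero hα (α.symm h))
      (fun h => not_rel_inl_inr_of_rank_eq_zero hβ (β.symm h))
  · exact hcoker i j

end Rank

section Product

variable (α β : Ptn n)

open Classical in
noncomputable def blockLabel : Fin n ⊕ Pt n → Option (Quotient α ⊕ Quotient β)
  | .inl i => if i ∈ dom α then none else some (.inl (Quotient.mk α (.inl i)))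
  | .inr (.inl _) => none
  | .inr (.inr j) => if j ∈ codom β then none else some (.inr (Quotient.mk β (.inr j)))

variable {α β} {i j : Fin n}

lemma blockLabel_inl_eq (h : kerr α i j) :
    blockLabel α β (.inl i) = blockLabel α β (.inl j) := by
  by_cases hj : j ∈ dom α
  · simp [blockLabel, hj, mem_dom_of_kerr h hj]
  · have hi : i ∉ dom α := fun hi => hj (mem_dom_of_kerr (α.symm h) hi)
    simpa [blockLabel, hi, hj] using Quotient.sound h

lemma blockLabel_inr_inr_eq (h : cokerr β i j) :
    blockLabel α β (.inr (.inr i)) = blockLabel α β (.inr (.inr j)) := by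
  by_cases hj : j ∈ codom β
  · simp [blockLabel, hj, mem_codom_of_cokerr h hj]
  · have hi : i ∉ codom β := fun hi => hj (mem_codom_of_cokerr (β.symm h) hi)
    simpa [blockLabel, hi, hj] using Quotient.sound h

lemma blockLabel_eq_of_mulBase {a b : Fin n ⊕ Pt n} (h : mulBase α β a b) :
    blockLabel α β a = blockLabel α β b := by
  rcases h with ⟨x, y, hxy, rfl, rfl⟩ | ⟨x, y, hxy, rfl, rfl⟩ <;>
    rcases x with i | i <;> rcases y with j | j
  · exact blockLabel_inl_eq hxy
  · simp [blockLabel, iota1, show i ∈ dom α from ⟨j, hxy⟩]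
  · simp [blockLabel, iota1, show j ∈ dom α from ⟨i, α.symm hxy⟩]
  · rfl
  · rfl
  · simp [blockLabel, iota2, show j ∈ codom β from ⟨i, hxy⟩]
  · simp [blockLabel, iota2, show i ∈ codom β from ⟨j, β.symm hxy⟩]
  · exact blockLabel_inr_inr_eq hxy

lemma blockLabel_eq_of_pmul {x y : Pt n} (h : (pmul α β).r x y) :
    blockLabel α β (iota3 x) = blockLabel α β (iota3 y) :=
  Setoid.eqvGen_le (s := Setoid.ker (blockLabel α β))
    (fun _ _ => blockLabel_eq_of_mulBase) h

lemma kerr_or_mem_dom_of_kerr_pmul (h : kerr (pmul α β) i j) :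
    kerr α i j ∨ i ∈ dom α ∧ j ∈ dom α := by
  have hl := blockLabel_eq_of_pmul h
  by_cases hi : i ∈ dom α <;> by_cases hj : j ∈ dom α
  · exact .inr ⟨hi, hj⟩
  · simp [blockLabel, iota3, hi, hj] at hl
  · simp [blockLabel, iota3, hi, hj] at hl
  · simp only [blockLabel, iota3, hi, hj, ↓reduceIte, Option.some.injEq, Sum.inl.injEq] at hl
    exact .inl (Quotient.exact hl)

lemma cokerr_or_mem_codom_of_cokerr_pmul (h : cokerr (pmul α β) i j) :
    cokerr β i j ∨ i ∈ codom β ∧ j ∈ codom β := by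
  have hl := blockLabel_eq_of_pmul h
  by_cases hi : i ∈ codom β <;> by_cases hj : j ∈ codom β
  · exact .inr ⟨hi, hj⟩
  · simp [blockLabel, iota3, hi, hj] at hl
  · simp [blockLabel, iota3, hi, hj] at hl
  · simp only [blockLabel, iota3, hi, hj, ↓reduceIte, Option.some.injEq, Sum.inr.injEq] at hl
    exact .inl (Quotient.exact hl)

lemma dom_pmul_subset : dom (pmul α β) ⊆ dom α := by
  rintro i ⟨j, h⟩
  by_contra hi
  have hl := blockLabel_eq_of_pmul h
  by_cases hj : j ∈ codom β <;> simp [blockLabel, iota3, hi, hj] at hl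

lemma kerr_pmul_of_kerr (h : kerr α i j) : kerr (pmul α β) i j :=
  Relation.EqvGen.rel _ _ (Or.inl ⟨.inl i, .inl j, h, rfl, rfl⟩)

lemma cokerr_pmul_of_cokerr (h : cokerr β i j) : cokerr (pmul α β) i j :=
  Relation.EqvGen.rel _ _ (Or.inr ⟨.inr i, .inr j, h, rfl, rfl⟩)

lemma kerr_pmul_of_rank_le_one (hα : rank α ≤ 1) : kerr (pmul α β) i j ↔ kerr α i j :=
  ⟨fun h => (kerr_or_mem_dom_of_kerr_pmul h).elim id
    fun ⟨hi, hj⟩ => kerr_of_rank_le_one hα hi hj, kerr_pmul_of_kerr⟩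

lemma cokerr_pmul_of_rank_le_one (hβ : rank β ≤ 1) : cokerr (pmul α β) i j ↔ cokerr β i j :=
  ⟨fun h => (cokerr_or_mem_codom_of_cokerr_pmul h).elim id
    fun ⟨hi, hj⟩ => cokerr_of_rank_le_one hβ hi hj, cokerr_pmul_of_cokerr⟩

lemma rank_pmul_eq_zero (hα : rank α = 0) : rank (pmul α β) = 0 :=
  rank_eq_zero_iff.2 fun i hi => rank_eq_zero_iff.1 hα i (dom_pmul_subset hi)

end Product

section Hat

variable (α : Ptn n)

lemma rank_hat : rank (hat α) = 0 :=
  rank_eq_zero_iff.2 fun _ ⟨_, h⟩ => Bool.noConfusion h.2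

lemma kerr_hat (i j : Fin n) : kerr (hat α) i j ↔ kerr α i j :=
  and_iff_left rfl

lemma cokerr_hat (i j : Fin n) : cokerr (hat α) i j ↔ cokerr α i j :=
  and_iff_left rfl

end Hat

end PM

/-- In the partition monoid `P_n`, the map `α ↦ α̂` sending a partition
of rank at most 1 to the unique rank-0 partition with the same kernel and cokernel is a
retraction from the ideal `I₁ = {α : rank α ≤ 1}` onto the minimal ideal
`I₀ = {α : rank α = 0}`: it maps `I₁` into `I₀` (preserving kernel and cokernel, and
being the unique such rank-0 partition), fixes `I₀` pointwise, and is a homomorphism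
on `I₁`. -/
theorem stmt11 (n : ℕ) :
    (∀ α : PM.Ptn n, PM.rank α ≤ 1 →
      PM.rank (PM.hat α) = 0 ∧
      (∀ i j : Fin n, PM.kerr (PM.hat α) i j ↔ PM.kerr α i j) ∧
      (∀ i j : Fin n, PM.cokerr (PM.hat α) i j ↔ PM.cokerr α i j) ∧
      ∀ β : PM.Ptn n, PM.rank β = 0 →
        (∀ i j : Fin n, PM.kerr β i j ↔ PM.kerr α i j) →
        (∀ i j : Fin n, PM.cokerr β i j ↔ PM.cokerr α i j) → β = PM.hat α) ∧
    (∀ α : PM.Ptn n, PM.rank α = 0 → PM.hat α = α) ∧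
    (∀ α β : PM.Ptn n, PM.rank α ≤ 1 → PM.rank β ≤ 1 →
      PM.hat (PM.pmul α β) = PM.pmul (PM.hat α) (PM.hat β)) := by
  open PM in
  refine ⟨fun α _ => ⟨rank_hat α, kerr_hat α, cokerr_hat α, fun β hβ hker hcoker => ?_⟩,
    fun α hα => eq_of_rank_eq_zero (rank_hat α) hα (kerr_hat α) (cokerr_hat α),
    fun α β hα hβ => ?_⟩
  · exact eq_of_rank_eq_zero hβ (rank_hat α) (fun i j => (hker i j).trans (kerr_hat α i j).symm)
      (fun i j => (hcoker i j).trans (cokerr_hat α i j).symm)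
  · have hα' : rank (hat α) ≤ 1 := (rank_hat α).trans_le zero_le_one
    have hβ' : rank (hat β) ≤ 1 := (rank_hat β).trans_le zero_le_one
    refine eq_of_rank_eq_zero (rank_hat _) (rank_pmul_eq_zero (rank_hat α)) (fun i j => ?_)
      (fun i j => ?_)
    · rw [kerr_hat, kerr_pmul_of_rank_le_one hα, kerr_pmul_of_rank_le_one hα', kerr_hat]
    · rw [cokerr_hat, cokerr_pmul_of_rank_le_one hβ, cokerr_pmul_of_rank_le_one hβ', cokerr_hat]
end

section
/- Let n = 2m be even. In the Brauer monoid B_n, let K̄ be the image of the Klein four-group K = {id₄, (1 2)(3 4), (1 3)(2 4), (1 4)(2 3)} ≤ S₄ under the embedding σ ↦ the rank-4 Brauer element with transversals {i, (iσ)'} for i ≤ 4 and blocks {2j−1, 2j}, {(2j−1)', (2j)'} for 3 ≤ j ≤ m. Then for every Brauer element α of rank 0 and every γ ∈ K̄, α γ = α ῑ and γ α = ῑ α, where ῑ is the image of id₄. -/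
namespace PM

/-- Block labels of the Brauer element `σ̄` (for `σ ∈ S₄ ≤ S_n`, `n = 2m + 4`):
transversals `{i, (iσ)'}` for `i < 4` and horizontal blocks `{2j-1, 2j}`,
`{(2j-1)', (2j)'}` on the remaining points. -/
def brKLabel (m : ℕ) (σ : Equiv.Perm (Fin 4)) : Pt (2 * m + 4) → (ℕ ⊕ (ℕ × Bool))
  | Sum.inl i => if i.val < 4 then Sum.inl i.val else Sum.inr ((i.val - 4) / 2, true)
  | Sum.inr j =>
      if h : j.val < 4 then Sum.inl (σ.symm ⟨j.val, h⟩).val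
      else Sum.inr ((j.val - 4) / 2, false)

/-- The Brauer element `σ̄ ∈ B_{2m+4}` corresponding to `σ ∈ S₄`. -/
def brK (m : ℕ) (σ : Equiv.Perm (Fin 4)) : Ptn (2 * m + 4) := Setoid.ker (brKLabel m σ)

/-- The Klein four-group inside `S₄`. -/
def klein : Set (Equiv.Perm (Fin 4)) :=
  {1, Equiv.swap 0 1 * Equiv.swap 2 3, Equiv.swap 0 2 * Equiv.swap 1 3,
    Equiv.swap 0 3 * Equiv.swap 1 2}

end PM

namespace PM16
open Equiv Equiv.Perm PM

set_option maxRecDepth 10000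

/-! ### rank zero and Brauer partner functions -/

lemma dom_empty {n : ℕ} (α : Ptn n) (h0 : rank α = 0) : dom α = ∅ := by
  by_contra h
  have hne : (dom α).Nonempty := Set.nonempty_iff_ne_empty.2 h
  obtain ⟨i₀, hi₀, hmin⟩ := Set.exists_min_image (dom α) id (Set.toFinite _) hne
  have hmem : i₀ ∈ {i : Fin n | i ∈ dom α ∧ ∀ j ∈ dom α, kerr α i j → i ≤ j} :=
    ⟨hi₀, fun j hj _ => hmin j hj⟩
  have h1 : {i : Fin n | i ∈ dom α ∧ ∀ j ∈ dom α, kerr α i j → i ≤ j} = ∅ :=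
    (Set.ncard_eq_zero (Set.toFinite _)).mp h0
  rw [h1] at hmem
  exact hmem

lemma no_trans {n : ℕ} (α : Ptn n) (h0 : rank α = 0) :
    ∀ i j, ¬ α.r (Sum.inl i) (Sum.inr j) := by
  intro i j h
  have : i ∈ dom α := ⟨j, h⟩
  rw [dom_empty α h0] at this
  exact this

lemma bot_partner {n : ℕ} (α : Ptn n) (hB : IsBrauer α) (h0 : rank α = 0) :
    ∃ f : Fin n → Fin n, (∀ i, f i ≠ i) ∧ (∀ i, α.r (Sum.inr i) (Sum.inr (f i))) ∧
      (∀ i j, α.r (Sum.inr i) (Sum.inr j) → j = i ∨ j = f i) ∧ (∀ i, f (f i) = i) := by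
  have hnt := no_trans α h0
  have main : ∀ i : Fin n, ∃ j, j ≠ i ∧ α.r (Sum.inr i) (Sum.inr j) ∧
      ∀ k, α.r (Sum.inr i) (Sum.inr k) → k = i ∨ k = j := by
    intro i
    obtain ⟨y, hy1, hy2, hy3⟩ := hB (Sum.inr i)
    cases y with
    | inl k => exact absurd (α.iseqv.symm hy2) (hnt k i)
    | inr j =>
      refine ⟨j, fun hc => hy1 (by rw [hc]), hy2, fun k hk => ?_⟩
      rcases hy3 _ hk with h | h
      · exact Or.inl (Sum.inr_injective h)
      · exact Or.inr (Sum.inr_injective h)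
  choose f hfne hfr hcok using main
  refine ⟨f, hfne, hfr, hcok, ?_⟩
  intro i
  rcases hcok (f i) i (α.iseqv.symm (hfr i)) with h | h
  · exact absurd h.symm (hfne i)
  · exact h.symm

lemma top_partner {n : ℕ} (α : Ptn n) (hB : IsBrauer α) (h0 : rank α = 0) :
    ∃ f : Fin n → Fin n, (∀ i, f i ≠ i) ∧ (∀ i, α.r (Sum.inl i) (Sum.inl (f i))) ∧
      (∀ i j, α.r (Sum.inl i) (Sum.inl j) → j = i ∨ j = f i) ∧ (∀ i, f (f i) = i) := by
  have hnt := no_trans α h0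
  have main : ∀ i : Fin n, ∃ j, j ≠ i ∧ α.r (Sum.inl i) (Sum.inl j) ∧
      ∀ k, α.r (Sum.inl i) (Sum.inl k) → k = i ∨ k = j := by
    intro i
    obtain ⟨y, hy1, hy2, hy3⟩ := hB (Sum.inl i)
    cases y with
    | inr k => exact absurd hy2 (hnt i k)
    | inl j =>
      refine ⟨j, fun hc => hy1 (by rw [hc]), hy2, fun k hk => ?_⟩
      rcases hy3 _ hk with h | h
      · exact Or.inl (Sum.inl_injective h)
      · exact Or.inr (Sum.inl_injective h)
  choose f hfne hfr hcok using main
  refine ⟨f, hfne, hfr, hcok, ?_⟩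
  intro i
  rcases hcok (f i) i (α.iseqv.symm (hfr i)) with h | h
  · exact absurd h.symm (hfne i)
  · exact h.symm

end PM16
set_option maxRecDepth 10000
namespace PM16
open Equiv Equiv.Perm PM

/-! ### Klein group finite checks -/

lemma klein_comm {σ : Perm (Fin 4)} (hσ : σ ∈ PM.klein) (p : Fin 4 → Fin 4)
    (h1 : ∀ a, p a ≠ a) (h2 : ∀ a, p (p a) = a) : ∀ a, p (σ a) = σ (p a) := by
  rcases hσ with rfl | rfl | rfl | rfl
  · simp
  · revert h1 h2; revert p; decide
  · revert h1 h2; revert p; decide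
  · revert h1 h2; revert p; decide

lemma klein_symm {σ : Perm (Fin 4)} (hσ : σ ∈ PM.klein) : σ.symm = σ := by
  rcases hσ with rfl | rfl | rfl | rfl
  · rfl
  · decide
  · decide
  · decide

/-! ### the fixed horizontal pairing `g` -/

def gval : ℕ → ℕ := fun v => if v < 4 then v else if (v - 4) % 2 = 0 then v + 1 else v - 1

lemma gval_lt {m v : ℕ} (h : v < 2*m+4) : gval v < 2*m+4 := by
  unfold gval; split_ifs <;> omega

lemma gval_invol (v : ℕ) : gval (gval v) = v := by
  unfold gval; split_ifs <;> omega

lemma gval_fix (v : ℕ) : gval v = v ↔ v < 4 := by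
  unfold gval; split_ifs <;> omega

lemma gval_ge {v : ℕ} (h : 4 ≤ v) : 4 ≤ gval v := by
  unfold gval; split_ifs <;> omega

lemma gval_div {v : ℕ} (h : 4 ≤ v) : (gval v - 4)/2 = (v - 4)/2 := by
  unfold gval; split_ifs <;> omega

lemma gval_pair {p q : ℕ} (hp : 4 ≤ p) (hq : 4 ≤ q) :
    (p - 4)/2 = (q - 4)/2 ↔ (q = p ∨ q = gval p) := by
  unfold gval; split_ifs <;> omega

def gPerm (m : ℕ) : Perm (Fin (2*m+4)) :=
  Function.Involutive.toPerm
    (fun i => ⟨gval i.val, gval_lt i.isLt⟩)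
    (fun i => Fin.ext (by simp [gval_invol]))

lemma gPerm_val (m : ℕ) (i : Fin (2*m+4)) : (gPerm m i).val = gval i.val := rfl

lemma gPerm_invol (m : ℕ) (i : Fin (2*m+4)) : gPerm m (gPerm m i) = i :=
  Fin.ext (by simp [gPerm_val, gval_invol])

lemma gPerm_fix (m : ℕ) (i : Fin (2*m+4)) : gPerm m i = i ↔ i.val < 4 := by
  rw [Fin.ext_iff, gPerm_val, gval_fix]

/-! ### the embedding of `Fin 4` and `brKLabel` characterizations -/

def e4 (m : ℕ) (a : Fin 4) : Fin (2*m+4) := ⟨a.val, by omega⟩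

@[simp] lemma e4_val (m : ℕ) (a : Fin 4) : (e4 m a).val = a.val := rfl

lemma brK_r (m : ℕ) (σ : Perm (Fin 4)) (u v : Pt (2*m+4)) :
    (brK m σ).r u v ↔ brKLabel m σ u = brKLabel m σ v := Iff.rfl

lemma lab_ll (m : ℕ) (σ : Perm (Fin 4)) (i j : Fin (2*m+4)) :
    brKLabel m σ (Sum.inl i) = brKLabel m σ (Sum.inl j) ↔ (j = i ∨ j = gPerm m i) := by
  simp only [brKLabel]
  rcases Nat.lt_or_ge i.val 4 with hi | hi <;> rcases Nat.lt_or_ge j.val 4 with hj | hj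
  · rw [if_pos hi, if_pos hj]
    have hg : gPerm m i = i := (gPerm_fix m i).mpr hi
    simp only [hg, Sum.inl.injEq, or_self, Fin.ext_iff]
    omega
  · rw [if_pos hi, if_neg (by omega)]
    have hg : gPerm m i = i := (gPerm_fix m i).mpr hi
    simp only [hg, or_self, Fin.ext_iff]
    constructor
    · intro h; exact absurd h (by simp)
    · omega
  · rw [if_neg (by omega), if_pos hj]
    constructor
    · intro h; exact absurd h (by simp)
    · rintro (h | h)
      · exfalso; rw [Fin.ext_iff] at h; omega
      · exfalso; rw [Fin.ext_iff, gPerm_val] at h; have := gval_ge hi; omega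
  · rw [if_neg (by omega), if_neg (by omega)]
    simp only [Sum.inr.injEq, Prod.mk.injEq, and_true, Fin.ext_iff, gPerm_val]
    rw [gval_pair hi hj]

lemma lab_rr (m : ℕ) (σ : Perm (Fin 4)) (p q : Fin (2*m+4)) :
    brKLabel m σ (Sum.inr p) = brKLabel m σ (Sum.inr q) ↔ (q = p ∨ q = gPerm m p) := by
  simp only [brKLabel]
  rcases Nat.lt_or_ge p.val 4 with hp | hp <;> rcases Nat.lt_or_ge q.val 4 with hq | hq
  · rw [dif_pos hp, dif_pos hq]
    have hg : gPerm m p = p := (gPerm_fix m p).mpr hp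
    simp only [hg, or_self, Sum.inl.injEq]
    constructor
    · intro h
      have h2 : σ.symm ⟨p.val, hp⟩ = σ.symm ⟨q.val, hq⟩ := Fin.ext h
      have h3 := σ.symm.injective h2
      rw [Fin.ext_iff] at h3
      exact Fin.ext h3.symm
    · rintro rfl; rfl
  · rw [dif_pos hp, dif_neg (by omega)]
    have hg : gPerm m p = p := (gPerm_fix m p).mpr hp
    simp only [hg, or_self]
    constructor
    · intro h; exact absurd h (by simp)
    · rintro rfl; omega
  · rw [dif_neg (by omega), dif_pos hq]
    constructor
    · intro h; exact absurd h (by simp)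
    · rintro (h | h)
      · exfalso; rw [Fin.ext_iff] at h; omega
      · exfalso; rw [Fin.ext_iff, gPerm_val] at h; have := gval_ge hp; omega
  · rw [dif_neg (by omega), dif_neg (by omega)]
    simp only [Sum.inr.injEq, Prod.mk.injEq, and_true, Fin.ext_iff, gPerm_val]
    rw [gval_pair hp hq]

lemma lab_lr (m : ℕ) (σ : Perm (Fin 4)) (i p : Fin (2*m+4)) :
    brKLabel m σ (Sum.inl i) = brKLabel m σ (Sum.inr p) ↔
      ∃ a : Fin 4, i = e4 m a ∧ p = e4 m (σ a) := by
  simp only [brKLabel]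
  rcases Nat.lt_or_ge i.val 4 with hi | hi <;> rcases Nat.lt_or_ge p.val 4 with hp | hp
  · rw [if_pos hi, dif_pos hp]
    constructor
    · intro h
      have h2 : i.val = (σ.symm ⟨p.val, hp⟩).val := Sum.inl_injective h
      refine ⟨⟨i.val, hi⟩, Fin.ext rfl, ?_⟩
      have h3 : (⟨i.val, hi⟩ : Fin 4) = σ.symm ⟨p.val, hp⟩ := Fin.ext h2
      have h4 : σ (⟨i.val, hi⟩ : Fin 4) = ⟨p.val, hp⟩ := by rw [h3, Equiv.apply_symm_apply]
      rw [h4]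
      exact Fin.ext rfl
    · rintro ⟨a, rfl, rfl⟩
      have h5 : (⟨(e4 m (σ a)).val, hp⟩ : Fin 4) = σ a := Fin.ext rfl
      rw [h5, Equiv.symm_apply_apply]
      rfl
  · rw [if_pos hi, dif_neg (by omega)]
    constructor
    · intro h; exact absurd h (by simp)
    · rintro ⟨a, rfl, hpa⟩
      exfalso
      have : p.val = (σ a).val := by rw [hpa]; rfl
      have := (σ a).isLt
      omega
  · rw [if_neg (by omega), dif_pos hp]
    constructor
    · intro h; exact absurd h (by simp)
    · rintro ⟨a, hia, rfl⟩
      exfalso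
      have : i.val = a.val := by rw [hia]; rfl
      have := a.isLt
      omega
  · rw [if_neg (by omega), dif_neg (by omega)]
    constructor
    · intro h
      exfalso
      have := Sum.inr_injective h
      simpa using this
    · rintro ⟨a, hia, rfl⟩
      exfalso
      have : i.val = a.val := by rw [hia]; rfl
      have := a.isLt
      omega

end PM16

open Equiv Equiv.Perm
namespace PM16
variable {N : ℕ}

/-- two cycles of `f*g` glued by `f`. -/
def MRel (f g : Perm (Fin N)) (x y : Fin N) : Prop :=
  SameCycle (f * g) x y ∨ SameCycle (f * g) (f x) y

section cyc
variable (f g : Perm (Fin N)) (hf2 : ∀ x, f (f x) = x) (hg2 : ∀ x, g (g x) = x)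

include hf2 in
lemma fsq : f * f = 1 := by ext x; simp [hf2]

include hf2 in
lemma finv : f⁻¹ = f := by
  rw [inv_eq_iff_mul_eq_one]; exact fsq f hf2

include hf2 hg2 in
lemma cinv : (f * g)⁻¹ = g * f := by
  rw [mul_inv_rev, finv f hf2, finv g hg2]

include hf2 hg2 in
lemma conj_f : f * (f * g) * f⁻¹ = (f * g)⁻¹ := by
  ext x
  simp [Perm.mul_apply, cinv f g hf2 hg2, finv f hf2, hf2]

include hf2 hg2 in
lemma conj_g : g * (f * g) * g⁻¹ = (f * g)⁻¹ := by
  ext x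
  simp [Perm.mul_apply, cinv f g hf2 hg2, finv g hg2, hg2]

include hf2 hg2 in
lemma sc_f {x y : Fin N} (h : SameCycle (f * g) x y) : SameCycle (f * g) (f x) (f y) := by
  have := (sameCycle_conj (g := f) (f := f * g) (x := f x) (y := f y))
  rw [conj_f f g hf2 hg2, finv f hf2] at this
  rw [← sameCycle_inv]
  exact this.mpr (by simpa [hf2] using h)

include hf2 hg2 in
lemma sc_g {x y : Fin N} (h : SameCycle (f * g) x y) : SameCycle (f * g) (g x) (g y) := by
  have := (sameCycle_conj (g := g) (f := f * g) (x := g x) (y := g y))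
  rw [conj_g f g hf2 hg2, finv g hg2] at this
  rw [← sameCycle_inv]
  exact this.mpr (by simpa [hg2] using h)

include hf2 hg2 in
lemma MRel_equivalence : Equivalence (MRel f g) := by
  constructor
  · exact fun x => Or.inl (SameCycle.refl _ _)
  · rintro x y (h | h)
    · exact Or.inl h.symm
    · exact Or.inr (by simpa [hf2] using (sc_f f g hf2 hg2 h.symm))
  · rintro x y z (h1 | h1) (h2 | h2)
    · exact Or.inl (h1.trans h2)
    · exact Or.inr ((sc_f f g hf2 hg2 h1).trans h2)
    · exact Or.inr (h1.trans h2)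
    · refine Or.inl ?_
      have h3 := sc_f f g hf2 hg2 h1
      rw [hf2] at h3
      exact h3.trans h2

lemma MRel_f (x : Fin N) : MRel f g x (f x) := Or.inr (SameCycle.refl _ _)

include hf2 hg2 in
lemma MRel_g (x : Fin N) : MRel f g x (g x) := by
  refine Or.inr ⟨-1, ?_⟩
  simp [cinv f g hf2 hg2, hf2]

omit hf2 in include hg2 in
lemma MRel_fixed {x y : Fin N} (hx : g x = x) : MRel f g x y ↔ SameCycle (f * g) x y := by
  unfold MRel
  constructor
  · rintro (h | h)
    · exact h
    · have : (f * g) x = f x := by simp [hx]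
      rw [← this] at h
      exact sameCycle_apply_left.mp h
  · exact Or.inl

end cyc

namespace Pairing
variable {N : ℕ} (f g : Perm (Fin N)) (hf2 : ∀ x, f (f x) = x) (hg2 : ∀ x, g (g x) = x)
  (hfne : ∀ x, f x ≠ x) (hgfix : ∀ x : Fin N, g x = x ↔ x.val < 4)
  (e : Fin 4 → Fin N) (he : ∀ a, (e a).val = a.val)

local notation "c" => f * g

include hf2 hg2 in
lemma gpow (k : ℕ) (x : Fin N) : g ((c ^ k) x) = ((c⁻¹) ^ k) (g x) := by
  have hc : ∀ y, g ((f*g) y) = (f*g)⁻¹ (g y) := by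
    intro y
    rw [PM16.cinv f g hf2 hg2]
    simp [Perm.mul_apply, hg2]
  induction k with
  | zero => simp
  | succ k ih =>
    have h1 : (c ^ (k+1)) x = c ((c ^ k) x) := by rw [pow_succ']; rfl
    have h2 : ((c⁻¹) ^ (k+1)) (g x) = c⁻¹ (((c⁻¹) ^ k) (g x)) := by rw [pow_succ']; rfl
    rw [h1, h2, ← ih]
    exact hc _

include hf2 hg2 in
lemma fpow (k : ℕ) (x : Fin N) : f ((c ^ k) x) = ((c⁻¹) ^ k) (f x) := by
  have hc : ∀ y, f ((f*g) y) = (f*g)⁻¹ (f y) := by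
    intro y
    rw [PM16.cinv f g hf2 hg2]
    simp [Perm.mul_apply, hf2]
  induction k with
  | zero => simp
  | succ k ih =>
    have h1 : (c ^ (k+1)) x = c ((c ^ k) x) := by rw [pow_succ']; rfl
    have h2 : ((c⁻¹) ^ (k+1)) (f x) = c⁻¹ (((c⁻¹) ^ k) (f x)) := by rw [pow_succ']; rfl
    rw [h1, h2, ← ih]
    exact hc _

lemma periodic (x : Fin N) : x ∈ Function.periodicPts ⇑c :=
  Function.mk_mem_periodicPts (orderOf_pos c) (by
    show (⇑c)^[orderOf c] x = x
    rw [Equiv.Perm.iterate_eq_pow, pow_orderOf_eq_one]; rfl)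

lemma pow_eq_iff (x : Fin N) (k : ℕ) :
    (c ^ k) x = x ↔ Function.minimalPeriod ⇑c x ∣ k := by
  rw [← Function.isPeriodicPt_iff_minimalPeriod_dvd]; rfl

lemma minper_pow (k : ℕ) (x : Fin N) :
    Function.minimalPeriod ⇑c ((c ^ k) x) = Function.minimalPeriod ⇑c x := by
  induction k with
  | zero => simp
  | succ k ih =>
    have h1 : (c ^ (k+1)) x = c ((c ^ k) x) := by rw [pow_succ']; rfl
    rw [h1, Function.minimalPeriod_apply (periodic f g _), ih]

include hf2 hg2 hfne hgfix he in
lemma L_even (a : Fin 4) : Function.minimalPeriod ⇑c (e a) % 2 = 0 := by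
  set x := e a with hxdef
  set L := Function.minimalPeriod ⇑c x with hL
  have hgx : g x = x := (hgfix x).mpr (by rw [hxdef, he]; exact a.isLt)
  have hLpos : 0 < L := Function.minimalPeriod_pos_of_mem_periodicPts (periodic f g x)
  by_contra hodd
  set j := (L + 1) / 2 with hj
  have h2j : 2 * j = L + 1 := by omega
  have hfx : f x = c x := by
    show f x = f (g x)
    rw [hgx]
  have key : f ((c ^ j) x) = (c ^ j) x := by
    apply (c ^ j).injective
    have e1 : (c ^ j) (f ((c ^ j) x)) = c x := by
      rw [fpow f g hf2 hg2, hfx, inv_pow]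
      show ((c ^ j) * (c ^ j)⁻¹) (c x) = c x
      rw [mul_inv_cancel]; rfl
    have e2 : (c ^ j) ((c ^ j) x) = c x := by
      have : (c ^ j) ((c ^ j) x) = (c ^ (j + j)) x := by rw [pow_add]; rfl
      rw [this, show j + j = L + 1 by omega, pow_succ']
      show c ((c ^ L) x) = c x
      rw [(pow_eq_iff f g x L).mpr dvd_rfl]
    rw [e1, e2]
  exact hfne _ key

include hf2 hg2 hfne hgfix he in
lemma pairing : ∃ p : Fin 4 → Fin 4, (∀ a, p a ≠ a) ∧ (∀ a, p (p a) = a) ∧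
    ∀ a b : Fin 4, (SameCycle c (e a) (e b) ↔ b = a ∨ b = p a) := by
  classical
  have hgx : ∀ a : Fin 4, g (e a) = e a := fun a => (hgfix _).mpr (by rw [he]; exact a.isLt)
  have he_inj : ∀ a b : Fin 4, e a = e b → a = b := by
    intro a b h
    have := congrArg Fin.val h
    rw [he, he] at this
    exact Fin.ext this
  have main : ∀ a : Fin 4, ∃ pa : Fin 4,
      pa ≠ a ∧ e pa = (c ^ (Function.minimalPeriod ⇑c (e a) / 2)) (e a) := by
    intro a
    set x := e a with hxdef
    set L := Function.minimalPeriod ⇑c x with hLdef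
    have hLpos : 0 < L := Function.minimalPeriod_pos_of_mem_periodicPts (periodic f g x)
    have hLe : L % 2 = 0 := L_even f g hf2 hg2 hfne hgfix e he a
    set y := (c ^ (L / 2)) x with hy
    have hgy : g y = y := by
      apply (c ^ (L / 2)).injective
      rw [hy, gpow f g hf2 hg2, hgx a, inv_pow]
      have h1 : (c ^ (L/2)) (((c ^ (L/2)))⁻¹ x) = x := by
        show ((c ^ (L/2)) * ((c ^ (L/2)))⁻¹) x = x
        rw [mul_inv_cancel]; rfl
      rw [h1]
      have h2 : (c ^ (L/2)) ((c ^ (L/2)) x) = (c ^ (L/2 + L/2)) x := by rw [pow_add]; rfl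
      rw [h2, show L/2 + L/2 = L by omega]
      exact ((pow_eq_iff f g x L).mpr dvd_rfl).symm
    have hylt : y.val < 4 := (hgfix y).mp hgy
    refine ⟨⟨y.val, hylt⟩, ?_, ?_⟩
    · intro hcon
      have hey : e ⟨y.val, hylt⟩ = y := Fin.ext (by rw [he])
      rw [hcon] at hey
      have hdvd : L ∣ L / 2 := (pow_eq_iff f g x (L/2)).mp (by rw [← hy]; exact hey.symm)
      have := Nat.le_of_dvd (by omega) hdvd
      omega
    · exact Fin.ext (by rw [he])
  choose p hpne hpe using main
  have hQ : ∀ a b : Fin 4, SameCycle c (e a) (e b) ↔ b = a ∨ b = p a := by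
    intro a b
    constructor
    · intro h
      obtain ⟨k, hk, hke⟩ := h.exists_pow_eq'
      set x := e a with hxdef
      set L := Function.minimalPeriod ⇑c x with hLdef
      have hLpos : 0 < L := Function.minimalPeriod_pos_of_mem_periodicPts (periodic f g x)
      have hLe : L % 2 = 0 := L_even f g hf2 hg2 hfne hgfix e he a
      have h2k : (c ^ (2 * k)) x = x := by
        have hgb : g ((c ^ k) x) = (c ^ k) x := by rw [hke, hgx b]
        rw [gpow f g hf2 hg2, hgx a] at hgb
        apply (c ^ k).injective
        have hgb' : (c⁻¹ ^ k) x = (c ^ k) x := hgb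
        calc (c ^ k) ((c ^ (2*k)) x) = (c ^ (k + 2*k)) x := by rw [pow_add]; rfl
          _ = (c ^ (2*k)) ((c ^ k) x) := by rw [show k + 2*k = 2*k + k by omega, pow_add]; rfl
          _ = (c ^ (2*k)) ((c⁻¹ ^ k) x) := by rw [hgb']
          _ = ((c ^ (2*k)) * ((c ^ k))⁻¹) x := by rw [inv_pow]; rfl
          _ = (c ^ k) x := by
              rw [show 2*k = k + k by omega, pow_add, mul_assoc, mul_inv_cancel, mul_one]
      have hdvd : L ∣ 2 * k := (pow_eq_iff f g x (2*k)).mp h2k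
      obtain ⟨l, hl2⟩ : ∃ l, L = 2 * l := ⟨L/2, by omega⟩
      have hldiv : L / 2 = l := by omega
      obtain ⟨t, ht⟩ := hdvd
      have hkt : k = l * t := by
        have h2 : 2 * k = 2 * (l * t) := by rw [ht, hl2]; ring
        omega
      rcases Nat.even_or_odd t with ⟨s, hs⟩ | ⟨s, hs⟩
      · left
        apply he_inj
        rw [← hke]
        have hkL : k = L * s := by rw [hkt, hs, hl2]; ring
        rw [hkL]
        exact ((pow_eq_iff f g x (L*s)).mpr ⟨s, rfl⟩)
      · right
        apply he_inj
        rw [← hke, hpe a]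
        have hkL : k = l + L * s := by rw [hkt, hs, hl2]; ring
        have h1 : (c ^ (L * s)) x = x := (pow_eq_iff f g x (L*s)).mpr ⟨s, rfl⟩
        rw [hkL, ← hLdef, hldiv]
        calc (c ^ (l + L*s)) x = (c ^ l) ((c ^ (L*s)) x) := by rw [pow_add]; rfl
          _ = (c ^ l) x := by rw [h1]
    · rintro (rfl | rfl)
      · exact SameCycle.refl _ _
      · exact ⟨((Function.minimalPeriod ⇑c (e a) / 2 : ℕ) : ℤ), by
          rw [zpow_natCast, ← hpe a]⟩
  refine ⟨p, hpne, ?_, hQ⟩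
  intro a
  have h1 : SameCycle c (e a) (e (p a)) := (hQ a (p a)).mpr (Or.inr rfl)
  rcases (hQ (p a) a).mp h1.symm with h | h
  · exact absurd h.symm (hpne a)
  · exact h.symm

end Pairing
end PM16
namespace PM16
open Equiv Equiv.Perm PM

section right
variable (m : ℕ) (α : Ptn (2*m+4)) (σ : Perm (Fin 4))

/-- Component labels of the three-layer product graph for `α ⋆ brK m σ`. -/
def labelR (MS : Setoid (Fin (2*m+4))) : (Fin (2*m+4) ⊕ Pt (2*m+4)) →
    (Quotient α ⊕ (Quotient MS ⊕ ℕ))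
  | Sum.inl i => Sum.inl (Quotient.mk α (Sum.inl i))
  | Sum.inr (Sum.inl i) => Sum.inr (Sum.inl (Quotient.mk MS i))
  | Sum.inr (Sum.inr p) =>
      if h : p.val < 4 then Sum.inr (Sum.inl (Quotient.mk MS (e4 m (σ.symm ⟨p.val, h⟩))))
      else Sum.inr (Sum.inr ((p.val - 4)/2))

variable (f : Perm (Fin (2*m+4))) (MS : Setoid (Fin (2*m+4)))
  (hf2 : ∀ x, f (f x) = x)
  (hfr : ∀ i, α.r (Sum.inr i) (Sum.inr (f i)))
  (hcok : ∀ i j, α.r (Sum.inr i) (Sum.inr j) → j = i ∨ j = f i)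
  (hnt : ∀ i j, ¬ α.r (Sum.inl i) (Sum.inr j))
  (hMS : ∀ x y, MS.r x y ↔ MRel f (gPerm m) x y)

include hf2 hfr hcok hnt hMS in
lemma eqvGen_right :
    Relation.EqvGen.setoid (mulBase α (brK m σ)) = Setoid.ker (labelR m α σ MS) := by
  have hg2 : ∀ x, gPerm m (gPerm m x) = x := gPerm_invol m
  set g := gPerm m with hgdef
  have hmk : ∀ i j : Fin (2*m+4),
      (Quotient.mk MS i = Quotient.mk MS j) ↔ MRel f g i j := by
    intro i j
    rw [Quotient.eq]
    exact hMS i j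
  apply le_antisymm
  · -- EqvGen ≤ ker
    apply Setoid.eqvGen_le
    rintro x y (⟨u, v, huv, rfl, rfl⟩ | ⟨u, v, huv, rfl, rfl⟩)
    · -- α edges (top & middle)
      cases u with
      | inl i =>
        cases v with
        | inl j =>
          show Sum.inl (Quotient.mk α (Sum.inl i)) = Sum.inl (Quotient.mk α (Sum.inl j))
          exact congrArg _ (Quotient.sound huv)
        | inr j => exact absurd huv (hnt i j)
      | inr i =>
        cases v with
        | inl j => exact absurd (α.iseqv.symm huv) (hnt j i)
        | inr j =>
          show Sum.inr (Sum.inl (Quotient.mk MS i)) = Sum.inr (Sum.inl (Quotient.mk MS j))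
          rcases hcok i j huv with rfl | rfl
          · rfl
          · exact congrArg _ (congrArg _ ((hmk _ _).mpr (MRel_f f g i)))
    · -- β edges (middle & bottom)
      rw [brK_r] at huv
      cases u with
      | inl i =>
        cases v with
        | inl j =>
          show Sum.inr (Sum.inl (Quotient.mk MS i)) = Sum.inr (Sum.inl (Quotient.mk MS j))
          rcases (lab_ll m σ i j).mp huv with rfl | rfl
          · rfl
          · exact congrArg _ (congrArg _ ((hmk _ _).mpr (MRel_g f g hf2 hg2 i)))
        | inr p =>
          obtain ⟨a, rfl, rfl⟩ := (lab_lr m σ (i := i) (p := p)).mp huv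
          show Sum.inr (Sum.inl (Quotient.mk MS (e4 m a))) = labelR m α σ MS (Sum.inr (Sum.inr (e4 m (σ a))))
          have hlt : (e4 m (σ a)).val < 4 := (σ a).isLt
          rw [labelR, dif_pos hlt]
          have h5 : (⟨(e4 m (σ a)).val, hlt⟩ : Fin 4) = σ a := Fin.ext rfl
          rw [h5, Equiv.symm_apply_apply]
      | inr p =>
        cases v with
        | inl j =>
          obtain ⟨a, rfl, rfl⟩ := (lab_lr m σ (i := j) (p := p)).mp
            ((brK m σ).iseqv.symm huv)
          show labelR m α σ MS (Sum.inr (Sum.inr (e4 m (σ a)))) = Sum.inr (Sum.inl (Quotient.mk MS (e4 m a)))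
          have hlt : (e4 m (σ a)).val < 4 := (σ a).isLt
          rw [labelR, dif_pos hlt]
          have h5 : (⟨(e4 m (σ a)).val, hlt⟩ : Fin 4) = σ a := Fin.ext rfl
          rw [h5, Equiv.symm_apply_apply]
        | inr q =>
          rcases (lab_rr m σ p q).mp huv with rfl | rfl
          · rfl
          · show labelR m α σ MS (Sum.inr (Sum.inr p)) = labelR m α σ MS (Sum.inr (Sum.inr (g p)))
            rcases Nat.lt_or_ge p.val 4 with hp | hp
            · have : g p = p := (gPerm_fix m p).mpr hp
              rw [this]
            · have hq : 4 ≤ (g p).val := by rw [gPerm_val]; exact gval_ge hp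
              rw [labelR, labelR, dif_neg (by omega), dif_neg (by omega)]
              rw [gPerm_val, gval_div hp]
  · -- ker ≤ EqvGen
    intro x y h0
    have h : labelR m α σ MS x = labelR m α σ MS y := h0
    clear h0
    show Relation.EqvGen (mulBase α (brK m σ)) x y
    set B := mulBase α (brK m σ) with hB
    have ebase_f : ∀ i, Relation.EqvGen B (Sum.inr (Sum.inl i)) (Sum.inr (Sum.inl (f i))) :=
      fun i => Relation.EqvGen.rel _ _ (Or.inl ⟨Sum.inr i, Sum.inr (f i), hfr i, rfl, rfl⟩)
    have ebase_g : ∀ i, Relation.EqvGen B (Sum.inr (Sum.inl i)) (Sum.inr (Sum.inl (g i))) :=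
      fun i => Relation.EqvGen.rel _ _
        (Or.inr ⟨Sum.inl i, Sum.inl (g i), (lab_ll m σ i (g i)).mpr (Or.inr rfl), rfl, rfl⟩)
    have estep : ∀ i, Relation.EqvGen B (Sum.inr (Sum.inl i)) (Sum.inr (Sum.inl ((f * g) i))) := by
      intro i
      have h1 : (f * g) i = f (g i) := rfl
      rw [h1]
      exact (ebase_g i).trans _ _ _ (ebase_f (g i))
    have epow : ∀ (k : ℕ) i, Relation.EqvGen B (Sum.inr (Sum.inl i))
        (Sum.inr (Sum.inl (((f * g) ^ k) i))) := by
      intro k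
      induction k with
      | zero => intro i; exact Relation.EqvGen.refl _
      | succ k ih =>
        intro i
        have h1 : ((f * g) ^ (k+1)) i = (f * g) (((f * g) ^ k) i) := by rw [pow_succ']; rfl
        rw [h1]
        exact (ih i).trans _ _ _ (estep (((f * g) ^ k) i))
    have esc : ∀ i j, SameCycle (f * g) i j →
        Relation.EqvGen B (Sum.inr (Sum.inl i)) (Sum.inr (Sum.inl j)) := by
      intro i j hsc
      obtain ⟨k, _, hke⟩ := hsc.exists_pow_eq'
      rw [← hke]
      exact epow k i
    have eM : ∀ i j, MRel f g i j →
        Relation.EqvGen B (Sum.inr (Sum.inl i)) (Sum.inr (Sum.inl j)) := by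
      rintro i j (hsc | hsc)
      · exact esc _ _ hsc
      · exact (ebase_f i).trans _ _ _ (esc (f i) j hsc)
    have ebot : ∀ a : Fin 4, Relation.EqvGen B (Sum.inr (Sum.inl (e4 m a)))
        (Sum.inr (Sum.inr (e4 m (σ a)))) :=
      fun a => Relation.EqvGen.rel _ _
        (Or.inr ⟨Sum.inl (e4 m a), Sum.inr (e4 m (σ a)),
          (lab_lr m σ (i := e4 m a) (p := e4 m (σ a))).mpr ⟨a, rfl, rfl⟩, rfl, rfl⟩)
    have ebotpair : ∀ p : Fin (2*m+4), Relation.EqvGen B (Sum.inr (Sum.inr p))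
        (Sum.inr (Sum.inr (g p))) :=
      fun p => Relation.EqvGen.rel _ _
        (Or.inr ⟨Sum.inr p, Sum.inr (g p), (lab_rr m σ p (g p)).mpr (Or.inr rfl), rfl, rfl⟩)
    -- analysis of label equality
    rcases x with i | x2
    · rcases y with j | y2
      · -- top, top
        have h2 : Quotient.mk α (Sum.inl i) = Quotient.mk α (Sum.inl j) := by
          simpa only [labelR, Sum.inl.injEq] using h
        exact Relation.EqvGen.rel _ _ (Or.inl ⟨Sum.inl i, Sum.inl j, Quotient.eq.mp h2, rfl, rfl⟩)
      · exfalso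
        rcases y2 with j | q
        · simp only [labelR] at h
          simp at h
        · simp only [labelR] at h
          split_ifs at h <;> simp at h
    · rcases y with j | y2
      · exfalso
        rcases x2 with i | p
        · simp only [labelR] at h
          simp at h
        · simp only [labelR] at h
          split_ifs at h <;> simp at h
      · rcases x2 with i | p <;> rcases y2 with j | q
        · -- mid mid
          simp only [labelR, Sum.inr.injEq, Sum.inl.injEq] at h
          exact eM i j ((hmk i j).mp h)
        · -- mid bot
          rcases Nat.lt_or_ge q.val 4 with hq | hq
          · simp only [labelR, dif_pos hq, Sum.inr.injEq, Sum.inl.injEq] at h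
            have hpath := eM i (e4 m (σ.symm ⟨q.val, hq⟩)) ((hmk _ _).mp h)
            have hfin := ebot (σ.symm ⟨q.val, hq⟩)
            rw [Equiv.apply_symm_apply] at hfin
            have hq2 : e4 m (⟨q.val, hq⟩ : Fin 4) = q := Fin.ext rfl
            rw [hq2] at hfin
            exact hpath.trans _ _ _ hfin
          · exfalso
            simp only [labelR, dif_neg (by omega : ¬ q.val < 4), Sum.inr.injEq] at h
            simp at h
        · -- bot mid
          rcases Nat.lt_or_ge p.val 4 with hp | hp
          · simp only [labelR, dif_pos hp, Sum.inr.injEq, Sum.inl.injEq] at h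
            have hpath := eM (e4 m (σ.symm ⟨p.val, hp⟩)) j ((hmk _ _).mp h)
            have hfin := ebot (σ.symm ⟨p.val, hp⟩)
            rw [Equiv.apply_symm_apply] at hfin
            have hp2 : e4 m (⟨p.val, hp⟩ : Fin 4) = p := Fin.ext rfl
            rw [hp2] at hfin
            exact (hfin.symm _ _).trans _ _ _ hpath
          · exfalso
            simp only [labelR, dif_neg (by omega : ¬ p.val < 4), Sum.inr.injEq] at h
            simp at h
        · -- bot bot
          rcases Nat.lt_or_ge p.val 4 with hp | hp <;> rcases Nat.lt_or_ge q.val 4 with hq | hq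
          · simp only [labelR, dif_pos hp, dif_pos hq, Sum.inr.injEq, Sum.inl.injEq] at h
            have hpath := eM _ _ ((hmk _ _).mp h)
            have h1 := ebot (σ.symm ⟨p.val, hp⟩)
            have h2 := ebot (σ.symm ⟨q.val, hq⟩)
            rw [Equiv.apply_symm_apply] at h1 h2
            have hp2 : e4 m (⟨p.val, hp⟩ : Fin 4) = p := Fin.ext rfl
            have hq2 : e4 m (⟨q.val, hq⟩ : Fin 4) = q := Fin.ext rfl
            rw [hp2] at h1
            rw [hq2] at h2
            exact ((h1.symm _ _).trans _ _ _ hpath).trans _ _ _ h2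
          · exfalso
            simp only [labelR, dif_pos hp, dif_neg (by omega : ¬ q.val < 4), Sum.inr.injEq] at h
            simp at h
          · exfalso
            simp only [labelR, dif_neg (by omega : ¬ p.val < 4), dif_pos hq, Sum.inr.injEq] at h
            simp at h
          · simp only [labelR, dif_neg (by omega : ¬ p.val < 4),
              dif_neg (by omega : ¬ q.val < 4), Sum.inr.injEq] at h
            rcases (gval_pair hp hq).mp h with hq3 | hq3
            · have : q = p := Fin.ext hq3
              rw [this]
              exact Relation.EqvGen.refl _
            · have : q = g p := Fin.ext (by rw [gPerm_val, hq3])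
              rw [this]
              exact ebotpair p
end right
end PM16
namespace PM16
open Equiv Equiv.Perm PM

section left
variable (m : ℕ) (α : Ptn (2*m+4)) (σ : Perm (Fin 4))

/-- Component labels of the three-layer product graph for `brK m σ ⋆ α`. -/
def labelL (MS : Setoid (Fin (2*m+4))) : (Fin (2*m+4) ⊕ Pt (2*m+4)) →
    (Quotient α ⊕ (Quotient MS ⊕ ℕ))
  | Sum.inl i =>
      if h : i.val < 4 then Sum.inr (Sum.inl (Quotient.mk MS (e4 m (σ ⟨i.val, h⟩))))
      else Sum.inr (Sum.inr ((i.val - 4)/2))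
  | Sum.inr (Sum.inl i) => Sum.inr (Sum.inl (Quotient.mk MS i))
  | Sum.inr (Sum.inr p) => Sum.inl (Quotient.mk α (Sum.inr p))

variable (f : Perm (Fin (2*m+4))) (MS : Setoid (Fin (2*m+4)))
  (hf2 : ∀ x, f (f x) = x)
  (hfr : ∀ i, α.r (Sum.inl i) (Sum.inl (f i)))
  (hker : ∀ i j, α.r (Sum.inl i) (Sum.inl j) → j = i ∨ j = f i)
  (hnt : ∀ i j, ¬ α.r (Sum.inl i) (Sum.inr j))
  (hMS : ∀ x y, MS.r x y ↔ MRel f (gPerm m) x y)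

include hf2 hfr hker hnt hMS in
lemma eqvGen_left :
    Relation.EqvGen.setoid (mulBase (brK m σ) α) = Setoid.ker (labelL m α σ MS) := by
  have hg2 : ∀ x, gPerm m (gPerm m x) = x := gPerm_invol m
  set g := gPerm m with hgdef
  have hmk : ∀ i j : Fin (2*m+4),
      (Quotient.mk MS i = Quotient.mk MS j) ↔ MRel f g i j := by
    intro i j
    rw [Quotient.eq]
    exact hMS i j
  apply le_antisymm
  · -- EqvGen ≤ ker
    apply Setoid.eqvGen_le
    rintro x y (⟨u, v, huv, rfl, rfl⟩ | ⟨u, v, huv, rfl, rfl⟩)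
    · -- brK edges (top & middle)
      rw [brK_r] at huv
      cases u with
      | inl i =>
        cases v with
        | inl j =>
          show labelL m α σ MS (Sum.inl i) = labelL m α σ MS (Sum.inl j)
          rcases (lab_ll m σ i j).mp huv with rfl | rfl
          · rfl
          · rcases Nat.lt_or_ge i.val 4 with hi | hi
            · rw [(gPerm_fix m i).mpr hi]
            · have hgi : 4 ≤ (gPerm m i).val := gval_ge hi
              rw [labelL, labelL, dif_neg (by omega), dif_neg (by omega)]
              rw [gPerm_val, gval_div hi]
        | inr p =>
          obtain ⟨a, rfl, rfl⟩ := (lab_lr m σ (i := i) (p := p)).mp huv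
          show labelL m α σ MS (Sum.inl (e4 m a)) = Sum.inr (Sum.inl (Quotient.mk MS (e4 m (σ a))))
          have hlt : (e4 m a).val < 4 := a.isLt
          rw [labelL, dif_pos hlt]
          have h5 : (⟨(e4 m a).val, hlt⟩ : Fin 4) = a := Fin.ext rfl
          rw [h5]
      | inr p =>
        cases v with
        | inl j =>
          obtain ⟨a, rfl, rfl⟩ := (lab_lr m σ (i := j) (p := p)).mp
            ((brK m σ).iseqv.symm huv)
          show Sum.inr (Sum.inl (Quotient.mk MS (e4 m (σ a)))) = labelL m α σ MS (Sum.inl (e4 m a))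
          have hlt : (e4 m a).val < 4 := a.isLt
          rw [labelL, dif_pos hlt]
          have h5 : (⟨(e4 m a).val, hlt⟩ : Fin 4) = a := Fin.ext rfl
          rw [h5]
        | inr q =>
          show Sum.inr (Sum.inl (Quotient.mk MS p)) = Sum.inr (Sum.inl (Quotient.mk MS q))
          rcases (lab_rr m σ p q).mp huv with rfl | rfl
          · rfl
          · exact congrArg _ (congrArg _ ((hmk _ _).mpr (MRel_g f g hf2 hg2 p)))
    · -- α edges (middle & bottom)
      cases u with
      | inl i =>
        cases v with
        | inl j =>
          show Sum.inr (Sum.inl (Quotient.mk MS i)) = Sum.inr (Sum.inl (Quotient.mk MS j))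
          rcases hker i j huv with rfl | rfl
          · rfl
          · exact congrArg _ (congrArg _ ((hmk _ _).mpr (MRel_f f g i)))
        | inr p => exact absurd huv (hnt i p)
      | inr p =>
        cases v with
        | inl j => exact absurd (α.iseqv.symm huv) (hnt j p)
        | inr q =>
          show Sum.inl (Quotient.mk α (Sum.inr p)) = Sum.inl (Quotient.mk α (Sum.inr q))
          exact congrArg _ (Quotient.sound huv)
  · -- ker ≤ EqvGen
    intro x y h0
    have h : labelL m α σ MS x = labelL m α σ MS y := h0
    clear h0
    show Relation.EqvGen (mulBase (brK m σ) α) x y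
    set B := mulBase (brK m σ) α with hB
    have ebase_f : ∀ i, Relation.EqvGen B (Sum.inr (Sum.inl i)) (Sum.inr (Sum.inl (f i))) :=
      fun i => Relation.EqvGen.rel _ _ (Or.inr ⟨Sum.inl i, Sum.inl (f i), hfr i, rfl, rfl⟩)
    have ebase_g : ∀ i, Relation.EqvGen B (Sum.inr (Sum.inl i)) (Sum.inr (Sum.inl (g i))) :=
      fun i => Relation.EqvGen.rel _ _
        (Or.inl ⟨Sum.inr i, Sum.inr (g i), (lab_rr m σ i (g i)).mpr (Or.inr rfl), rfl, rfl⟩)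
    have estep : ∀ i, Relation.EqvGen B (Sum.inr (Sum.inl i)) (Sum.inr (Sum.inl ((f * g) i))) := by
      intro i
      have h1 : (f * g) i = f (g i) := rfl
      rw [h1]
      exact (ebase_g i).trans _ _ _ (ebase_f (g i))
    have epow : ∀ (k : ℕ) i, Relation.EqvGen B (Sum.inr (Sum.inl i))
        (Sum.inr (Sum.inl (((f * g) ^ k) i))) := by
      intro k
      induction k with
      | zero => intro i; exact Relation.EqvGen.refl _
      | succ k ih =>
        intro i
        have h1 : ((f * g) ^ (k+1)) i = (f * g) (((f * g) ^ k) i) := by rw [pow_succ']; rfl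
        rw [h1]
        exact (ih i).trans _ _ _ (estep (((f * g) ^ k) i))
    have esc : ∀ i j, SameCycle (f * g) i j →
        Relation.EqvGen B (Sum.inr (Sum.inl i)) (Sum.inr (Sum.inl j)) := by
      intro i j hsc
      obtain ⟨k, _, hke⟩ := hsc.exists_pow_eq'
      rw [← hke]
      exact epow k i
    have eM : ∀ i j, MRel f g i j →
        Relation.EqvGen B (Sum.inr (Sum.inl i)) (Sum.inr (Sum.inl j)) := by
      rintro i j (hsc | hsc)
      · exact esc _ _ hsc
      · exact (ebase_f i).trans _ _ _ (esc (f i) j hsc)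
    have etop : ∀ a : Fin 4, Relation.EqvGen B (Sum.inl (e4 m a))
        (Sum.inr (Sum.inl (e4 m (σ a)))) :=
      fun a => Relation.EqvGen.rel _ _
        (Or.inl ⟨Sum.inl (e4 m a), Sum.inr (e4 m (σ a)),
          (lab_lr m σ (i := e4 m a) (p := e4 m (σ a))).mpr ⟨a, rfl, rfl⟩, rfl, rfl⟩)
    have etoppair : ∀ p : Fin (2*m+4), Relation.EqvGen B (Sum.inl p) (Sum.inl (g p)) :=
      fun p => Relation.EqvGen.rel _ _
        (Or.inl ⟨Sum.inl p, Sum.inl (g p), (lab_ll m σ p (g p)).mpr (Or.inr rfl), rfl, rfl⟩)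
    rcases x with i | x2
    · rcases y with j | y2
      · -- top top
        rcases Nat.lt_or_ge i.val 4 with hi | hi <;> rcases Nat.lt_or_ge j.val 4 with hj | hj
        · simp only [labelL, dif_pos hi, dif_pos hj, Sum.inr.injEq, Sum.inl.injEq] at h
          have hpath := eM _ _ ((hmk _ _).mp h)
          have h1 := etop ⟨i.val, hi⟩
          have h2 := etop ⟨j.val, hj⟩
          have hi2 : e4 m (⟨i.val, hi⟩ : Fin 4) = i := Fin.ext rfl
          have hj2 : e4 m (⟨j.val, hj⟩ : Fin 4) = j := Fin.ext rfl
          rw [hi2] at h1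
          rw [hj2] at h2
          exact (h1.trans _ _ _ hpath).trans _ _ _ (h2.symm _ _)
        · exfalso
          simp only [labelL, dif_pos hi, dif_neg (by omega : ¬ j.val < 4), Sum.inr.injEq] at h
          simp at h
        · exfalso
          simp only [labelL, dif_neg (by omega : ¬ i.val < 4), dif_pos hj, Sum.inr.injEq] at h
          simp at h
        · simp only [labelL, dif_neg (by omega : ¬ i.val < 4),
            dif_neg (by omega : ¬ j.val < 4), Sum.inr.injEq] at h
          rcases (gval_pair hi hj).mp h with hj3 | hj3
          · have : j = i := Fin.ext hj3
            rw [this]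
            exact Relation.EqvGen.refl _
          · have : j = g i := Fin.ext (by rw [gPerm_val, hj3])
            rw [this]
            exact etoppair i
      · rcases y2 with j | q
        · -- top mid
          rcases Nat.lt_or_ge i.val 4 with hi | hi
          · simp only [labelL, dif_pos hi, Sum.inr.injEq, Sum.inl.injEq] at h
            have hpath := eM _ _ ((hmk _ _).mp h)
            have h1 := etop ⟨i.val, hi⟩
            have hi2 : e4 m (⟨i.val, hi⟩ : Fin 4) = i := Fin.ext rfl
            rw [hi2] at h1
            exact h1.trans _ _ _ hpath
          · exfalso
            simp only [labelL, dif_neg (by omega : ¬ i.val < 4), Sum.inr.injEq] at h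
            simp at h
        · -- top bot
          exfalso
          simp only [labelL] at h
          split_ifs at h <;> simp at h
    · rcases y with j | y2
      · rcases x2 with i | p
        · -- mid top
          rcases Nat.lt_or_ge j.val 4 with hj | hj
          · simp only [labelL, dif_pos hj, Sum.inr.injEq, Sum.inl.injEq] at h
            have hpath := eM _ _ ((hmk _ _).mp h)
            have h2 := etop ⟨j.val, hj⟩
            have hj2 : e4 m (⟨j.val, hj⟩ : Fin 4) = j := Fin.ext rfl
            rw [hj2] at h2
            exact hpath.trans _ _ _ (h2.symm _ _)
          · exfalso
            simp only [labelL, dif_neg (by omega : ¬ j.val < 4), Sum.inr.injEq] at h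
            simp at h
        · -- bot top
          exfalso
          simp only [labelL] at h
          split_ifs at h <;> simp at h
      · rcases x2 with i | p <;> rcases y2 with j | q
        · -- mid mid
          simp only [labelL, Sum.inr.injEq, Sum.inl.injEq] at h
          exact eM i j ((hmk i j).mp h)
        · -- mid bot
          exfalso
          simp only [labelL] at h
          simp at h
        · -- bot mid
          exfalso
          simp only [labelL] at h
          simp at h
        · -- bot bot
          simp only [labelL, Sum.inl.injEq] at h
          exact Relation.EqvGen.rel _ _
            (Or.inr ⟨Sum.inr p, Sum.inr q, Quotient.eq.mp h, rfl, rfl⟩)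
end left
end PM16
namespace PM16
open Equiv Equiv.Perm PM

lemma Q_invariance {N : ℕ} (f g : Perm (Fin N)) (hf2 : ∀ x, f (f x) = x)
    (hg2 : ∀ x, g (g x) = x) (hfne : ∀ x, f x ≠ x)
    (hgfix : ∀ x : Fin N, g x = x ↔ x.val < 4)
    (e : Fin 4 → Fin N) (he : ∀ a, (e a).val = a.val)
    {σ : Perm (Fin 4)} (hσ : σ ∈ PM.klein) (a b : Fin 4) :
    SameCycle (f * g) (e (σ a)) (e (σ b)) ↔ SameCycle (f * g) (e a) (e b) := by
  obtain ⟨p, hp1, hp2, hQ⟩ := Pairing.pairing f g hf2 hg2 hfne hgfix e he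
  rw [hQ, hQ]
  have hc := klein_comm hσ p hp1 hp2
  constructor
  · rintro (h | h)
    · exact Or.inl (σ.injective h)
    · right
      apply σ.injective
      rw [h, hc]
  · rintro (rfl | rfl)
    · exact Or.inl rfl
    · right
      rw [hc]

lemma MRel_invariance {N : ℕ} (f g : Perm (Fin N)) (hf2 : ∀ x, f (f x) = x)
    (hg2 : ∀ x, g (g x) = x) (hfne : ∀ x, f x ≠ x)
    (hgfix : ∀ x : Fin N, g x = x ↔ x.val < 4)
    (e : Fin 4 → Fin N) (he : ∀ a, (e a).val = a.val)
    {σ : Perm (Fin 4)} (hσ : σ ∈ PM.klein) (a b : Fin 4) :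
    MRel f g (e (σ a)) (e (σ b)) ↔ MRel f g (e a) (e b) := by
  have hfix : ∀ d : Fin 4, g (e d) = e d := fun d => (hgfix _).mpr (by rw [he]; exact d.isLt)
  rw [MRel_fixed f g hg2 (hfix (σ a)), MRel_fixed f g hg2 (hfix a)]
  exact Q_invariance f g hf2 hg2 hfne hgfix e he hσ a b

end PM16

/-- In the Brauer monoid `B_n` with `n = 2m + 4` even, every element
of the copy `K̄` of the Klein four-group acts on rank-0 Brauer elements exactly as the
identity `ῑ = brK m 1` does: `α γ = α ῑ` and `γ α = ῑ α` for all `γ ∈ K̄`. -/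
theorem stmt16 (m : ℕ) (α : PM.Ptn (2 * m + 4)) (hB : PM.IsBrauer α)
    (h0 : PM.rank α = 0) (σ : Equiv.Perm (Fin 4)) (hσ : σ ∈ PM.klein) :
    PM.pmul α (PM.brK m σ) = PM.pmul α (PM.brK m 1) ∧
    PM.pmul (PM.brK m σ) α = PM.pmul (PM.brK m 1) α := by
  classical
  open PM PM16 Equiv Equiv.Perm in
  have hnt : ∀ i j, ¬ α.r (Sum.inl i) (Sum.inr j) := PM16.no_trans α h0
  have hsymm : σ.symm = σ := PM16.klein_symm hσ
  have hg2 : ∀ x, PM16.gPerm m (PM16.gPerm m x) = x := PM16.gPerm_invol m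
  have hgfix := PM16.gPerm_fix m
  have he4 : ∀ a : Fin 4, (PM16.e4 m a).val = a.val := fun a => rfl
  constructor
  · -- right multiplication
    obtain ⟨fb, hfne, hfr, hcok, hff⟩ := PM16.bot_partner α hB h0
    set fP : Equiv.Perm (Fin (2*m+4)) := Function.Involutive.toPerm fb hff with hfP
    have hfPa : ∀ x, fP x = fb x := fun x => rfl
    have hf2 : ∀ x, fP (fP x) = x := fun x => hff x
    have hfne' : ∀ x, fP x ≠ x := fun x => hfne x
    have hMeq := PM16.MRel_equivalence fP (PM16.gPerm m) hf2 hg2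
    set MS : Setoid (Fin (2*m+4)) := ⟨PM16.MRel fP (PM16.gPerm m), hMeq⟩ with hMS
    have hMSr : ∀ x y, MS.r x y ↔ PM16.MRel fP (PM16.gPerm m) x y := fun x y => Iff.rfl
    have E1 := PM16.eqvGen_right m α σ fP MS hf2 (fun i => hfr i) hcok hnt hMSr
    have E2 := PM16.eqvGen_right m α 1 fP MS hf2 (fun i => hfr i) hcok hnt hMSr
    show Setoid.comap PM.iota3 (Relation.EqvGen.setoid (PM.mulBase α (PM.brK m σ))) =
      Setoid.comap PM.iota3 (Relation.EqvGen.setoid (PM.mulBase α (PM.brK m 1)))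
    rw [E1, E2]
    apply Setoid.ext
    intro x y
    show PM16.labelR m α σ MS (PM.iota3 x) = PM16.labelR m α σ MS (PM.iota3 y) ↔
      PM16.labelR m α 1 MS (PM.iota3 x) = PM16.labelR m α 1 MS (PM.iota3 y)
    rcases x with i | p <;> rcases y with j | q
    · exact Iff.rfl
    · -- top vs bot : both sides false
      constructor <;> intro h <;> exfalso <;>
        (simp only [PM.iota3, PM16.labelR] at h; split_ifs at h <;> simp at h)
    · constructor <;> intro h <;> exfalso <;>
        (simp only [PM.iota3, PM16.labelR] at h; split_ifs at h <;> simp at h)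
    · -- bot bot
      rcases Nat.lt_or_ge p.val 4 with hp | hp <;> rcases Nat.lt_or_ge q.val 4 with hq | hq
      · simp only [PM.iota3, PM16.labelR, dif_pos hp, dif_pos hq, Sum.inr.injEq, Sum.inl.injEq,
          Quotient.eq]
        show PM16.MRel fP (PM16.gPerm m) _ _ ↔ PM16.MRel fP (PM16.gPerm m) _ _
        have h1 : (1 : Equiv.Perm (Fin 4)).symm = 1 := rfl
        rw [hsymm, h1]
        have h2 : ∀ a : Fin 4, (1 : Equiv.Perm (Fin 4)) a = a := fun a => rfl
        rw [show ((1 : Equiv.Perm (Fin 4)) ⟨p.val, hp⟩) = (⟨p.val, hp⟩ : Fin 4) from rfl,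
          show ((1 : Equiv.Perm (Fin 4)) ⟨q.val, hq⟩) = (⟨q.val, hq⟩ : Fin 4) from rfl]
        exact PM16.MRel_invariance fP (PM16.gPerm m) hf2 hg2 hfne' hgfix (PM16.e4 m) he4
          hσ ⟨p.val, hp⟩ ⟨q.val, hq⟩
      · simp only [PM.iota3, PM16.labelR, dif_pos hp, dif_neg (by omega : ¬ q.val < 4)]
        constructor <;> intro h <;> exfalso <;> simp at h
      · simp only [PM.iota3, PM16.labelR, dif_neg (by omega : ¬ p.val < 4), dif_pos hq]
        constructor <;> intro h <;> exfalso <;> simp at h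
      · simp only [PM.iota3, PM16.labelR, dif_neg (by omega : ¬ p.val < 4),
          dif_neg (by omega : ¬ q.val < 4)]
        try exact Iff.rfl
  · -- left multiplication
    obtain ⟨ft, hfne, hfr, hker, hff⟩ := PM16.top_partner α hB h0
    set fP : Equiv.Perm (Fin (2*m+4)) := Function.Involutive.toPerm ft hff with hfP
    have hf2 : ∀ x, fP (fP x) = x := fun x => hff x
    have hfne' : ∀ x, fP x ≠ x := fun x => hfne x
    have hMeq := PM16.MRel_equivalence fP (PM16.gPerm m) hf2 hg2
    set MS : Setoid (Fin (2*m+4)) := ⟨PM16.MRel fP (PM16.gPerm m), hMeq⟩ with hMS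
    have hMSr : ∀ x y, MS.r x y ↔ PM16.MRel fP (PM16.gPerm m) x y := fun x y => Iff.rfl
    have E1 := PM16.eqvGen_left m α σ fP MS hf2 (fun i => hfr i) hker hnt hMSr
    have E2 := PM16.eqvGen_left m α 1 fP MS hf2 (fun i => hfr i) hker hnt hMSr
    show Setoid.comap PM.iota3 (Relation.EqvGen.setoid (PM.mulBase (PM.brK m σ) α)) =
      Setoid.comap PM.iota3 (Relation.EqvGen.setoid (PM.mulBase (PM.brK m 1) α))
    rw [E1, E2]
    apply Setoid.ext
    intro x y
    show PM16.labelL m α σ MS (PM.iota3 x) = PM16.labelL m α σ MS (PM.iota3 y) ↔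
      PM16.labelL m α 1 MS (PM.iota3 x) = PM16.labelL m α 1 MS (PM.iota3 y)
    rcases x with i | p <;> rcases y with j | q
    · -- top top
      rcases Nat.lt_or_ge i.val 4 with hi | hi <;> rcases Nat.lt_or_ge j.val 4 with hj | hj
      · simp only [PM.iota3, PM16.labelL, dif_pos hi, dif_pos hj, Sum.inr.injEq, Sum.inl.injEq,
          Quotient.eq]
        show PM16.MRel fP (PM16.gPerm m) _ _ ↔ PM16.MRel fP (PM16.gPerm m) _ _
        rw [show ((1 : Equiv.Perm (Fin 4)) ⟨i.val, hi⟩) = (⟨i.val, hi⟩ : Fin 4) from rfl,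
          show ((1 : Equiv.Perm (Fin 4)) ⟨j.val, hj⟩) = (⟨j.val, hj⟩ : Fin 4) from rfl]
        exact PM16.MRel_invariance fP (PM16.gPerm m) hf2 hg2 hfne' hgfix (PM16.e4 m) he4
          hσ ⟨i.val, hi⟩ ⟨j.val, hj⟩
      · simp only [PM.iota3, PM16.labelL, dif_pos hi, dif_neg (by omega : ¬ j.val < 4)]
        constructor <;> intro h <;> exfalso <;> simp at h
      · simp only [PM.iota3, PM16.labelL, dif_neg (by omega : ¬ i.val < 4), dif_pos hj]
        constructor <;> intro h <;> exfalso <;> simp at h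
      · simp only [PM.iota3, PM16.labelL, dif_neg (by omega : ¬ i.val < 4),
          dif_neg (by omega : ¬ j.val < 4)]
        try exact Iff.rfl
    · -- top bot
      constructor <;> intro h <;> exfalso <;>
        (simp only [PM.iota3, PM16.labelL] at h; split_ifs at h <;> simp at h)
    · constructor <;> intro h <;> exfalso <;>
        (simp only [PM.iota3, PM16.labelL] at h; split_ifs at h <;> simp at h)
    · exact Iff.rfl
end
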